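/- For every positive integer n, the forcing number of the 2n × 2n square region (the region whose unit squares have lower-left corners (a,b) with 0 ≤ a ≤ 2n−1 and 0 ≤ b ≤ 2n−1) is equal to n. -/

import Mathlib

/-- The closed unit square with lower-left corner `s`, as a subset of `ℝ × ℝ`. -/
def unitSq (s : ℤ × ℤ) : Set (ℝ × ℝ) :=
  Set.Icc (s.1 : ℝ) (s.1 + 1) ×ˢ Set.Icc (s.2 : ℝ) (s.2 + 1)

/-- The union of the closed unit squares of a region `R`. -/
def regionSpace (R : Finset (ℤ × ℤ)) : Set (ℝ × ℝ) := ⋃ s ∈ R, unitSq s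

/-- The embedding of a lattice point into the plane. -/
def embPt (x : ℤ × ℤ) : ℝ × ℝ := ((x.1 : ℝ), (x.2 : ℝ))

/-- The four corners of the unit square with lower-left corner `s`. -/
def sqCorners (s : ℤ × ℤ) : Set (ℤ × ℤ) :=
  {s, (s.1 + 1, s.2), (s.1, s.2 + 1), (s.1 + 1, s.2 + 1)}

/-- `V R` : the lattice points that are corners of squares of `R`. -/
def V (R : Finset (ℤ × ℤ)) : Set (ℤ × ℤ) := {x | ∃ s ∈ R, x ∈ sqCorners s}

/-- `bdry R` : lattice points lying on the topological boundary of the region. -/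
def bdry (R : Finset (ℤ × ℤ)) : Set (ℤ × ℤ) := {x | embPt x ∈ frontier (regionSpace R)}

/-- The square with lower-left corner `s` is white when `s.1 + s.2` is even. -/
def White (s : ℤ × ℤ) : Prop := Even (s.1 + s.2)

/-- A domino: a pair of unit squares sharing a side. -/
def IsDomino (d : Finset (ℤ × ℤ)) : Prop :=
  ∃ s t : ℤ × ℤ, d = {s, t} ∧ (t - s = (1, 0) ∨ t - s = (0, 1))

/-- A domino tiling of `R` : a partition of the squares of `R` into dominoes. -/
def IsDominoTiling (R : Finset (ℤ × ℤ)) (T : Finset (Finset (ℤ × ℤ))) : Prop :=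
  (∀ d ∈ T, IsDomino d ∧ ∀ s ∈ d, s ∈ R) ∧ ∀ s ∈ R, ∃! d, d ∈ T ∧ s ∈ d

/-- The four unit steps in the square lattice. -/
def unitSteps : Set (ℤ × ℤ) := {(1, 0), (-1, 0), (0, 1), (0, -1)}

/-- A directed lattice edge of `R`. -/
def DirectedEdge (R : Finset (ℤ × ℤ)) (x y : ℤ × ℤ) : Prop :=
  x ∈ V R ∧ y ∈ V R ∧ y - x ∈ unitSteps ∧
    segment ℝ (embPt x) (embPt y) ⊆ regionSpace R

/-- A directed lattice edge of `R` lying on the boundary `∂R`. -/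
def BoundaryEdge (R : Finset (ℤ × ℤ)) (x y : ℤ × ℤ) : Prop :=
  DirectedEdge R x y ∧ segment ℝ (embPt x) (embPt y) ⊆ frontier (regionSpace R)

/-- The union of the closed squares of a domino. -/
def dominoSpace (d : Finset (ℤ × ℤ)) : Set (ℝ × ℝ) := ⋃ s ∈ d, unitSq s

/-- The edge `(x, y)` belongs to the tiling `T` : its segment is not contained in the
interior of a domino of `T`. -/
def EdgeInTiling (R : Finset (ℤ × ℤ)) (T : Finset (Finset (ℤ × ℤ))) (x y : ℤ × ℤ) : Prop :=
  DirectedEdge R x y ∧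
    ¬ ∃ d ∈ T, segment ℝ (embPt x) (embPt y) ⊆ interior (dominoSpace d)

/-- The unit square adjacent to the directed edge `(x, y)` on its left. -/
def leftSq (x y : ℤ × ℤ) : ℤ × ℤ :=
  if y = (x.1 + 1, x.2) then (x.1, x.2)
  else if y = (x.1 - 1, x.2) then (x.1 - 1, x.2 - 1)
  else if y = (x.1, x.2 + 1) then (x.1 - 1, x.2)
  else (x.1, x.2 - 1)

/-- `h` is a height function of the tiling `T` of `R`. -/
def IsHeightFunction (R : Finset (ℤ × ℤ)) (T : Finset (Finset (ℤ × ℤ)))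
    (h : ℤ × ℤ → ℤ) : Prop :=
  ∀ x y : ℤ × ℤ, EdgeInTiling R T x y → White (leftSq x y) → h x - h y = 1

/-- `S` is a forcing set of the tiling `T` of `R`. -/
def IsForcingSet (R : Finset (ℤ × ℤ)) (T S : Finset (Finset (ℤ × ℤ))) : Prop :=
  S ⊆ T ∧ ∀ T', IsDominoTiling R T' → S ⊆ T' → T' = T

/-- The forcing number of `R`. -/
noncomputable def forcingNumber (R : Finset (ℤ × ℤ)) : ℕ :=
  sInf {n | ∃ T S, IsDominoTiling R T ∧ IsForcingSet R T S ∧ S.card = n}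

/-- The function `α`. -/
def alpha (x y : ℤ × ℤ) : ℤ :=
  if (Even (x.1 - x.2) ∧ y.2 - x.2 ≤ y.1 - x.1) ∨ (¬ Even (x.1 - x.2) ∧ y.1 - x.1 < y.2 - x.2)
  then 2 * max |y.1 - x.1| |y.2 - x.2| + ((y.1 - x.1) - (y.2 - x.2)) % 2
  else 2 * max |y.1 - x.1| |y.2 - x.2| - ((y.1 - x.1) - (y.2 - x.2)) % 2

/-- The Chebyshev norm on `ℤ × ℤ`. -/
def cheb (v : ℤ × ℤ) : ℤ := max |v.1| |v.2|

/-- A geodesic path in the square lattice. -/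
def IsGeodesicPath (n : ℕ) (f : Fin (n + 1) → ℤ × ℤ) : Prop :=
  ∀ i : Fin n, f i.castSucc ≠ f i.succ ∧
    (∃ s : ℤ × ℤ, f i.castSucc ∈ sqCorners s ∧ f i.succ ∈ sqCorners s) ∧
    cheb (f i.succ - f 0) = cheb (f i.castSucc - f 0) + 1

/-- `x ∼_R y` : some geodesic path from `x` to `y` has all of its points in `V R`. -/
def geoRel (R : Finset (ℤ × ℤ)) (x y : ℤ × ℤ) : Prop :=
  ∃ (n : ℕ) (f : Fin (n + 1) → ℤ × ℤ), IsGeodesicPath n f ∧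
    f 0 = x ∧ f (Fin.last n) = y ∧ ∀ i, f i ∈ V R

/-- The black squares of `R`. -/
def blackSquares (R : Finset (ℤ × ℤ)) : Finset (ℤ × ℤ) :=
  R.filter fun s => ¬ Even (s.1 + s.2)

/-- The set of white squares of `R` adjacent to at least one square of `U`. -/
noncomputable def nbhdSq (R U : Finset (ℤ × ℤ)) : Finset (ℤ × ℤ) :=
  @Finset.filter _ (fun w => Even (w.1 + w.2) ∧ ∃ b ∈ U, w - b ∈ unitSteps)
    (Classical.decPred _) R

/-- The excess `e(U) = |N(U)| - |U|`. -/
noncomputable def excess (R U : Finset (ℤ × ℤ)) : ℤ :=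
  ((nbhdSq R U).card : ℤ) - U.card

/-- The maximum excess of an ordering (given as a list) of the black squares. -/
noncomputable def maxExcess (R : Finset (ℤ × ℤ)) (l : List (ℤ × ℤ)) : ℤ :=
  sSup {z : ℤ | ∃ k, 1 ≤ k ∧ k ≤ l.length ∧ z = excess R (l.take k).toFinset}

/-- The minimum maximum excess of `R` over all orderings of its black squares. -/
noncomputable def minMaxExcess (R : Finset (ℤ × ℤ)) : ℤ :=
  sInf {z : ℤ | ∃ l : List (ℤ × ℤ), l.Nodup ∧ l.toFinset = blackSquares R ∧
    z = maxExcess R l}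

/-- The `2n × 2n` square region. -/
noncomputable def squareRegion (n : ℕ) : Finset (ℤ × ℤ) :=
  Finset.Icc ((0 : ℤ), (0 : ℤ)) ((2 * n - 1 : ℤ), (2 * n - 1 : ℤ))

/-- The square of side `2k` centered at `x` (as a set of unit squares). -/
noncomputable def centerSquare (x : ℤ × ℤ) (k : ℕ) : Finset (ℤ × ℤ) :=
  Finset.Icc ((x.1 - k, x.2 - k) : ℤ × ℤ) ((x.1 + k - 1, x.2 + k - 1) : ℤ × ℤ)

/-- Possible values at `x` of height functions of tilings of `R` normalized at `v₀`. -/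
def heightVals (R : Finset (ℤ × ℤ)) (v₀ x : ℤ × ℤ) : Set ℤ :=
  {m | ∃ T h, IsDominoTiling R T ∧ IsHeightFunction R T h ∧ h v₀ = 0 ∧ h x = m}

/-- `c(x)` : the side of the largest square centered at `x` whose removal keeps `R` tileable. -/
noncomputable def maxSquareSide (R : Finset (ℤ × ℤ)) (x : ℤ × ℤ) : ℕ :=
  sSup {m : ℕ | ∃ k : ℕ, m = 2 * k ∧ centerSquare x k ⊆ R ∧
    ∃ T, IsDominoTiling (R \ centerSquare x k) T}


/-!
Upper bound: in the pinwheel tiling (vertical dominoes in the left and right wedges cut out by the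
diagonals, horizontal ones in the top and bottom wedges) the `n` horizontal dominoes along the
anti-diagonal of the upper-left quarter force all the others, one domino at a time.

Lower bound: let `T'` be the mirror image of a tiling `T` in the diagonal. Where `T` and `T'`
differ they form alternating cycles, and a forcing set of `T` meets each of them, since otherwise
exchanging `T` for `T'` along that cycle gives a second tiling containing it. Every diagonal square
lies on such a cycle, and the reflection reverses each cycle, so it fixes at most two of its
squares; hence the `2n` diagonal squares lie on at least `n` different cycles.
-/

open Finset

section Dominoes

lemma sub_mem_unitSteps_iff {a b x y : ℤ} :
    (a, b) - (x, y) ∈ unitSteps ↔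
      (a = x + 1 ∧ b = y) ∨ (a = x - 1 ∧ b = y) ∨ (a = x ∧ b = y + 1) ∨ (a = x ∧ b = y - 1) := by
  simp only [unitSteps, Set.mem_insert_iff, Set.mem_singleton_iff, Prod.mk_sub_mk, Prod.mk.injEq]
  omega

lemma ne_of_sub_mem_unitSteps {s t : ℤ × ℤ} (h : t - s ∈ unitSteps) : t ≠ s := by
  rintro rfl
  simp [unitSteps, Prod.ext_iff] at h

lemma swap_sub_swap_mem_unitSteps {s t : ℤ × ℤ} (h : t - s ∈ unitSteps) :
    t.swap - s.swap ∈ unitSteps := by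
  obtain ⟨a, b⟩ := t; obtain ⟨x, y⟩ := s
  rw [sub_mem_unitSteps_iff] at h
  rw [Prod.swap_prod_mk, Prod.swap_prod_mk, sub_mem_unitSteps_iff]
  omega

lemma white_iff_not_white_of_sub_mem_unitSteps {s t : ℤ × ℤ} (h : t - s ∈ unitSteps) :
    White t ↔ ¬ White s := by
  obtain ⟨a, b⟩ := t; obtain ⟨x, y⟩ := s
  rw [sub_mem_unitSteps_iff] at h
  simp only [White, Int.even_iff]
  omega

lemma isDomino_pair {s t : ℤ × ℤ} (h : t - s ∈ unitSteps) : IsDomino {s, t} := by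
  simp only [unitSteps, Set.mem_insert_iff, Set.mem_singleton_iff] at h
  rcases h with h | h | h | h
  · exact ⟨s, t, rfl, Or.inl h⟩
  · exact ⟨t, s, pair_comm s t, Or.inl (by rw [← neg_sub, h]; rfl)⟩
  · exact ⟨s, t, rfl, Or.inr h⟩
  · exact ⟨t, s, pair_comm s t, Or.inr (by rw [← neg_sub, h]; rfl)⟩

lemma IsDomino.exists_eq_pair {d : Finset (ℤ × ℤ)} (hd : IsDomino d) {s : ℤ × ℤ} (hs : s ∈ d) :
    ∃ t, t - s ∈ unitSteps ∧ d = {s, t} := by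
  obtain ⟨a, b, rfl, hab⟩ := hd
  rcases mem_insert.mp hs with rfl | hs
  · exact ⟨b, by rcases hab with h | h <;> simp [unitSteps, h], rfl⟩
  · rw [mem_singleton.mp hs]
    refine ⟨a, ?_, pair_comm _ _⟩
    rw [← neg_sub]
    rcases hab with h | h <;> simp [unitSteps, h]

end Dominoes

section Partner

variable {R : Finset (ℤ × ℤ)} {T : Finset (Finset (ℤ × ℤ))}

lemma IsDominoTiling.mem_of_mem {d : Finset (ℤ × ℤ)} (hT : IsDominoTiling R T) (hd : d ∈ T)
    {s : ℤ × ℤ} (hs : s ∈ d) : s ∈ R :=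
  (hT.1 d hd).2 s hs

open Classical in
/-- The square paired with `s` by `T`; squares covered by no domino are their own partner. -/
noncomputable def partner (T : Finset (Finset (ℤ × ℤ))) (s : ℤ × ℤ) : ℤ × ℤ :=
  if h : ∃ t, t ≠ s ∧ {s, t} ∈ T then h.choose else s

lemma partner_spec (hT : IsDominoTiling R T) {s : ℤ × ℤ} (hs : s ∈ R) :
    partner T s ≠ s ∧ {s, partner T s} ∈ T := by
  obtain ⟨d, ⟨hd, hsd⟩, -⟩ := hT.2 s hs
  obtain ⟨t, hst, rfl⟩ := (hT.1 d hd).1.exists_eq_pair hsd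
  have hex : ∃ t, t ≠ s ∧ {s, t} ∈ T := ⟨t, ne_of_sub_mem_unitSteps hst, hd⟩
  rw [partner, dif_pos hex]
  exact hex.choose_spec

lemma partner_ne (hT : IsDominoTiling R T) {s : ℤ × ℤ} (hs : s ∈ R) : partner T s ≠ s :=
  (partner_spec hT hs).1

lemma pair_partner_mem (hT : IsDominoTiling R T) {s : ℤ × ℤ} (hs : s ∈ R) :
    {s, partner T s} ∈ T :=
  (partner_spec hT hs).2

lemma eq_pair_partner (hT : IsDominoTiling R T) {d : Finset (ℤ × ℤ)} (hd : d ∈ T)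
    {s : ℤ × ℤ} (hs : s ∈ d) : d = {s, partner T s} := by
  have hsR := hT.mem_of_mem hd hs
  obtain ⟨d₀, -, huniq⟩ := hT.2 s hsR
  rw [huniq d ⟨hd, hs⟩, huniq _ ⟨pair_partner_mem hT hsR, mem_insert_self _ _⟩]

lemma partner_sub_mem_unitSteps (hT : IsDominoTiling R T) {s : ℤ × ℤ} (hs : s ∈ R) :
    partner T s - s ∈ unitSteps := by
  obtain ⟨t, hst, heq⟩ := (hT.1 _ (pair_partner_mem hT hs)).1.exists_eq_pair (mem_insert_self s _)
  have ht : partner T s ∈ ({s, t} : Finset (ℤ × ℤ)) :=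
    heq ▸ mem_insert_of_mem (mem_singleton_self _)
  rw [mem_insert, mem_singleton, or_iff_right (partner_ne hT hs)] at ht
  rwa [ht]

lemma partner_eq_of_pair_mem (hT : IsDominoTiling R T) {s t : ℤ × ℤ} (h : {s, t} ∈ T)
    (hne : t ≠ s) : partner T s = t := by
  have heq := eq_pair_partner hT h (mem_insert_self _ _)
  have := heq ▸ mem_insert_of_mem (mem_singleton_self t)
  simp only [mem_insert, mem_singleton, hne, false_or] at this
  exact this.symm

lemma partner_of_notMem (hT : IsDominoTiling R T) {s : ℤ × ℤ} (hs : s ∉ R) :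
    partner T s = s := by
  rw [partner, dif_neg]
  rintro ⟨t, -, ht⟩
  exact hs (hT.mem_of_mem ht (mem_insert_self _ _))

lemma partner_mem (hT : IsDominoTiling R T) {s : ℤ × ℤ} (hs : s ∈ R) : partner T s ∈ R :=
  hT.mem_of_mem (pair_partner_mem hT hs) (mem_insert_of_mem (mem_singleton_self _))

lemma partner_mem_iff (hT : IsDominoTiling R T) {s : ℤ × ℤ} : partner T s ∈ R ↔ s ∈ R := by
  by_cases hs : s ∈ R
  · exact iff_of_true (partner_mem hT hs) hs
  · rw [partner_of_notMem hT hs]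

lemma partner_partner (hT : IsDominoTiling R T) (s : ℤ × ℤ) : partner T (partner T s) = s := by
  by_cases hs : s ∈ R
  · apply partner_eq_of_pair_mem hT _ (partner_ne hT hs).symm
    rw [pair_comm]
    exact pair_partner_mem hT hs
  · rw [partner_of_notMem hT hs, partner_of_notMem hT hs]

lemma white_partner_iff (hT : IsDominoTiling R T) {s : ℤ × ℤ} (hs : s ∈ R) :
    White (partner T s) ↔ ¬ White s :=
  white_iff_not_white_of_sub_mem_unitSteps (partner_sub_mem_unitSteps hT hs)

lemma eq_image_pair_partner (hT : IsDominoTiling R T) :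
    T = R.image fun s => {s, partner T s} := by
  ext d
  constructor
  · intro hd
    obtain ⟨s, t, rfl, -⟩ := (hT.1 d hd).1
    exact mem_image.mpr ⟨s, hT.mem_of_mem hd (mem_insert_self _ _),
      (eq_pair_partner hT hd (mem_insert_self _ _)).symm⟩
  · rintro hd
    obtain ⟨s, hs, rfl⟩ := mem_image.mp hd
    exact pair_partner_mem hT hs

lemma isDominoTiling_image_pair {p : ℤ × ℤ → ℤ × ℤ} (hmem : ∀ s ∈ R, p s ∈ R)
    (hadj : ∀ s ∈ R, p s - s ∈ unitSteps) (hinv : ∀ s ∈ R, p (p s) = s) :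
    IsDominoTiling R (R.image fun s => {s, p s}) := by
  refine ⟨?_, fun s hs => ⟨{s, p s}, ⟨mem_image_of_mem _ hs, mem_insert_self _ _⟩, ?_⟩⟩
  · simp only [mem_image]
    rintro d ⟨s, hs, rfl⟩
    refine ⟨isDomino_pair (hadj s hs), fun t ht => ?_⟩
    rcases mem_insert.mp ht with rfl | ht
    · exact hs
    · exact mem_singleton.mp ht ▸ hmem s hs
  · rintro d ⟨hd, hsd⟩
    obtain ⟨t, ht, rfl⟩ := mem_image.mp hd
    rcases mem_insert.mp hsd with rfl | hsd
    · rfl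
    · rw [mem_singleton.mp hsd, hinv t ht, pair_comm]

lemma partner_image_pair {p : ℤ × ℤ → ℤ × ℤ} (hmem : ∀ s ∈ R, p s ∈ R)
    (hadj : ∀ s ∈ R, p s - s ∈ unitSteps) (hinv : ∀ s ∈ R, p (p s) = s) {s : ℤ × ℤ}
    (hs : s ∈ R) : partner (R.image fun s => {s, p s}) s = p s :=
  partner_eq_of_pair_mem (isDominoTiling_image_pair hmem hadj hinv)
    (mem_image_of_mem _ hs) (ne_of_sub_mem_unitSteps (hadj s hs))

end Partner

section Forcing

variable {R : Finset (ℤ × ℤ)} {T₁ T₂ S : Finset (Finset (ℤ × ℤ))}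

/-- Otherwise exchanging the dominoes of `T₁` meeting `C` for those of `T₂` gives a second tiling
containing `S`. -/
lemma IsForcingSet.exists_meets (hT₁ : IsDominoTiling R T₁) (hT₂ : IsDominoTiling R T₂)
    (hS : IsForcingSet R T₁ S) {C : Set (ℤ × ℤ)} (hC₁ : ∀ s ∈ C, partner T₁ s ∈ C)
    (hC₂ : ∀ s ∈ C, partner T₂ s ∈ C) {s : ℤ × ℤ} (hsR : s ∈ R) (hsC : s ∈ C)
    (hne : partner T₁ s ≠ partner T₂ s) : ∃ d ∈ S, ∃ t ∈ d, t ∈ C := by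
  classical
  by_contra! hS_out
  set p : ℤ × ℤ → ℤ × ℤ := fun t => if t ∈ C then partner T₂ t else partner T₁ t with hp
  have hC₁' : ∀ t, partner T₁ t ∈ C → t ∈ C := fun t h => partner_partner hT₁ t ▸ hC₁ _ h
  have hmem : ∀ t ∈ R, p t ∈ R := fun t ht => by
    simp only [hp]; split_ifs
    exacts [partner_mem hT₂ ht, partner_mem hT₁ ht]
  have hadj : ∀ t ∈ R, p t - t ∈ unitSteps := fun t ht => by
    simp only [hp]; split_ifs
    exacts [partner_sub_mem_unitSteps hT₂ ht, partner_sub_mem_unitSteps hT₁ ht]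
  have hinv : ∀ t ∈ R, p (p t) = t := fun t _ => by
    by_cases ht : t ∈ C
    · simp only [hp, if_pos ht, if_pos (hC₂ t ht), partner_partner hT₂]
    · simp only [hp, if_neg ht, if_neg (mt (hC₁' t) ht), partner_partner hT₁]
  have hS_sub : S ⊆ R.image fun t => {t, p t} := fun d hd => by
    have hd₁ := hS.1 hd
    rw [eq_image_pair_partner hT₁] at hd₁
    obtain ⟨t, ht, rfl⟩ := mem_image.mp hd₁
    refine mem_image.mpr ⟨t, ht, ?_⟩
    simp only [hp, if_neg (hS_out _ hd t (mem_insert_self _ _))]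
  have hflip := hS.2 _ (isDominoTiling_image_pair hmem hadj hinv) hS_sub
  apply hne
  rw [← hflip, partner_image_pair hmem hadj hinv hsR]
  exact if_pos hsC

end Forcing

section Groups

variable {G : Type*} [Group G]

lemma mul_zpow_mul_eq_zpow_neg {a b : G} (ha : a * a = 1) (hb : b * b = 1) (k : ℤ) :
    a * (b * a) ^ k * a = (b * a) ^ (-k) := by
  have ha' : a⁻¹ = a := inv_eq_of_mul_eq_one_right ha
  have hb' : b⁻¹ = b := inv_eq_of_mul_eq_one_right hb
  have hconj : a * (b * a) * a⁻¹ = (b * a)⁻¹ := by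
    rw [mul_inv_rev, ha', hb', mul_assoc, mul_assoc, ha, mul_one]
  calc a * (b * a) ^ k * a = a * (b * a) ^ k * a⁻¹ := by rw [ha']
    _ = (b * a) ^ (-k) := by rw [← conj_zpow, hconj, inv_zpow, zpow_neg]

lemma exists_zpow_of_mem_closure_pair {a b : G} (ha : a * a = 1) (hb : b * b = 1) {g : G}
    (hg : g ∈ Subgroup.closure {a, b}) : ∃ k : ℤ, g = (b * a) ^ k ∨ g = a * (b * a) ^ k := by
  have hrefl := mul_zpow_mul_eq_zpow_neg ha hb
  induction hg using Subgroup.closure_induction with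
  | mem x hx =>
    rcases hx with rfl | rfl
    · exact ⟨0, Or.inr (by simp)⟩
    · refine ⟨-1, Or.inr ?_⟩
      rw [zpow_neg_one, mul_inv_rev, ← mul_assoc, mul_inv_cancel, one_mul,
        inv_eq_of_mul_eq_one_right hb]
  | one => exact ⟨0, Or.inl (by simp)⟩
  | mul x y _ _ hx hy =>
    obtain ⟨j, rfl | rfl⟩ := hx <;> obtain ⟨k, rfl | rfl⟩ := hy
    · exact ⟨j + k, Or.inl (by rw [zpow_add])⟩
    · refine ⟨-j + k, Or.inr ?_⟩
      rw [zpow_add, ← hrefl, ← mul_assoc, ← mul_assoc, ← mul_assoc, ← mul_assoc, ha, one_mul]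
    · exact ⟨j + k, Or.inr (by rw [zpow_add, mul_assoc])⟩
    · refine ⟨-j + k, Or.inl ?_⟩
      rw [zpow_add, ← hrefl, ← mul_assoc]
  | inv x _ hx =>
    obtain ⟨k, rfl | rfl⟩ := hx
    · exact ⟨-k, Or.inl (zpow_neg _ k).symm⟩
    · refine ⟨k, Or.inr ?_⟩
      rw [mul_inv_rev, inv_eq_of_mul_eq_one_right ha, ← zpow_neg, ← hrefl, mul_assoc, ha,
        mul_one]

lemma Int.emod_eq_zero_or_eq_half_of_dvd_two_mul {m k : ℤ} (hm : 0 ≤ m) (h : m ∣ 2 * k) :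
    k % m = 0 ∨ k % m = m / 2 := by
  rcases hm.eq_or_lt with rfl | hm
  · simp only [zero_dvd_iff] at h
    omega
  have hr : m ∣ 2 * (k % m) := by
    rw [Int.emod_def, mul_sub]
    exact dvd_sub h ⟨2 * (k / m), by ring⟩
  obtain ⟨c, hc⟩ := hr
  have h0 := Int.emod_nonneg k hm.ne'
  have h1 := Int.emod_lt_of_pos k hm
  have hc0 : 0 ≤ c := by nlinarith
  have hc1 : c < 2 := by nlinarith
  interval_cases c <;> omega

variable {α : Type*} [MulAction G α]

lemma zpow_smul_eq_or_eq_of_zpow_two_mul_smul_eq {g : G} {x : α} {k : ℤ}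
    (hk : g ^ (2 * k) • x = x) :
    g ^ k • x = x ∨ g ^ k • x = g ^ ((MulAction.period g x : ℤ) / 2) • x := by
  rw [← MulAction.zpow_mod_period_smul k]
  rcases Int.emod_eq_zero_or_eq_half_of_dvd_two_mul (Int.natCast_nonneg _)
    (MulAction.zpow_smul_eq_iff_period_dvd.mp hk) with h | h
  · exact Or.inl (by rw [h, zpow_zero, one_smul])
  · exact Or.inr (by rw [h])

end Groups

lemma Equiv.Perm.zpow_apply_mem_iff {α : Type*} {e : Equiv.Perm α} {s : Set α}
    (h : ∀ x, e x ∈ s ↔ x ∈ s) (k : ℤ) (x : α) : (e ^ k) x ∈ s ↔ x ∈ s := by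
  induction k using Int.induction_on generalizing x with
  | zero => simp
  | succ k ih => rw [zpow_add_one, Equiv.Perm.mul_apply, ih, h]
  | pred k ih =>
    rw [zpow_sub_one, Equiv.Perm.mul_apply, ih]
    simpa using (h (e⁻¹ x)).symm

section AlternatingCycles

variable {R : Finset (ℤ × ℤ)} {T T₁ T₂ : Finset (Finset (ℤ × ℤ))}

noncomputable def partnerPerm (hT : IsDominoTiling R T) : Equiv.Perm (ℤ × ℤ) :=
  Function.Involutive.toPerm _ (partner_partner hT)

lemma partnerPerm_apply (hT : IsDominoTiling R T) (s : ℤ × ℤ) :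
    partnerPerm hT s = partner T s := rfl

lemma partnerPerm_mul_self (hT : IsDominoTiling R T) : partnerPerm hT * partnerPerm hT = 1 :=
  Equiv.ext (partner_partner hT)

lemma partnerPerm_inv (hT : IsDominoTiling R T) : (partnerPerm hT)⁻¹ = partnerPerm hT :=
  inv_eq_of_mul_eq_one_right (partnerPerm_mul_self hT)

/-- Following an alternating cycle two steps at a time. -/
noncomputable def cycleRotation (hT₁ : IsDominoTiling R T₁) (hT₂ : IsDominoTiling R T₂) :
    Equiv.Perm (ℤ × ℤ) :=
  partnerPerm hT₂ * partnerPerm hT₁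

def alternatingCycle (hT₁ : IsDominoTiling R T₁) (hT₂ : IsDominoTiling R T₂) (s : ℤ × ℤ) :
    Set (ℤ × ℤ) :=
  MulAction.orbit (Subgroup.closure {partnerPerm hT₁, partnerPerm hT₂}) s

variable (hT₁ : IsDominoTiling R T₁) (hT₂ : IsDominoTiling R T₂)

lemma partner_mem_alternatingCycle_left {s t : ℤ × ℤ} (ht : t ∈ alternatingCycle hT₁ hT₂ s) :
    partner T₁ t ∈ alternatingCycle hT₁ hT₂ s :=
  MulAction.mem_orbit_of_mem_orbit (⟨partnerPerm hT₁, Subgroup.subset_closure (by simp)⟩ :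
    Subgroup.closure {partnerPerm hT₁, partnerPerm hT₂}) ht

lemma partner_mem_alternatingCycle_right {s t : ℤ × ℤ} (ht : t ∈ alternatingCycle hT₁ hT₂ s) :
    partner T₂ t ∈ alternatingCycle hT₁ hT₂ s :=
  MulAction.mem_orbit_of_mem_orbit (⟨partnerPerm hT₂, Subgroup.subset_closure (by simp)⟩ :
    Subgroup.closure {partnerPerm hT₁, partnerPerm hT₂}) ht

lemma alternatingCycle_eq_of_mem_of_mem {s s' t : ℤ × ℤ}
    (ht : t ∈ alternatingCycle hT₁ hT₂ s) (ht' : t ∈ alternatingCycle hT₁ hT₂ s') :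
    alternatingCycle hT₁ hT₂ s = alternatingCycle hT₁ hT₂ s' :=
  (MulAction.orbit_eq_iff.mpr ht).symm.trans (MulAction.orbit_eq_iff.mpr ht')

lemma mem_alternatingCycle_of_mem_of_mem {d : Finset (ℤ × ℤ)} (hd : d ∈ T₁) {s s' t t' : ℤ × ℤ}
    (ht : t ∈ d) (hts : t ∈ alternatingCycle hT₁ hT₂ s) (ht' : t' ∈ d)
    (hts' : t' ∈ alternatingCycle hT₁ hT₂ s') : s' ∈ alternatingCycle hT₁ hT₂ s := by
  have ht's : t' ∈ alternatingCycle hT₁ hT₂ s := by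
    rw [eq_pair_partner hT₁ hd ht, mem_insert, mem_singleton] at ht'
    rcases ht' with rfl | rfl
    exacts [hts, partner_mem_alternatingCycle_left hT₁ hT₂ hts]
  rw [alternatingCycle_eq_of_mem_of_mem hT₁ hT₂ ht's hts']
  exact MulAction.mem_orbit_self s'

lemma exists_zpow_of_mem_alternatingCycle {s t : ℤ × ℤ} (ht : t ∈ alternatingCycle hT₁ hT₂ s) :
    ∃ k : ℤ, t = (cycleRotation hT₁ hT₂ ^ k) s ∨
      t = partner T₁ ((cycleRotation hT₁ hT₂ ^ k) s) := by
  obtain ⟨⟨g, hg⟩, rfl⟩ := MulAction.mem_orbit_iff.mp ht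
  obtain ⟨k, rfl | rfl⟩ := exists_zpow_of_mem_closure_pair (partnerPerm_mul_self hT₁)
    (partnerPerm_mul_self hT₂) hg
  exacts [⟨k, Or.inl rfl⟩, ⟨k, Or.inr rfl⟩]

lemma white_zpow_apply {s : ℤ × ℤ} (hs : s ∈ R) (hw : White s) (k : ℤ) :
    (cycleRotation hT₁ hT₂ ^ k) s ∈ R ∧
      White ((cycleRotation hT₁ hT₂ ^ k) s) := by
  refine (Equiv.Perm.zpow_apply_mem_iff (s := {x | x ∈ R ∧ White x}) (fun x => ?_) k s).mpr
    ⟨hs, hw⟩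
  simp only [Set.mem_ofPred_eq, cycleRotation, Equiv.Perm.mul_apply, partnerPerm_apply,
    partner_mem_iff hT₁, partner_mem_iff hT₂]
  refine and_congr_right fun hx => ?_
  rw [white_partner_iff hT₂ (partner_mem hT₁ hx), white_partner_iff hT₁ hx, not_not]

end AlternatingCycles

section Transpose

variable {R : Finset (ℤ × ℤ)} {T : Finset (Finset (ℤ × ℤ))}

/-- The mirror image of `T` in the diagonal, described through its partner map. -/
noncomputable def transposeTiling (R : Finset (ℤ × ℤ)) (T : Finset (Finset (ℤ × ℤ))) :
    Finset (Finset (ℤ × ℤ)) :=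
  R.image fun s => {s, (partner T s.swap).swap}

variable (hR : ∀ s ∈ R, s.swap ∈ R) (hT : IsDominoTiling R T)
include hR hT

lemma swap_partner_swap_sub_mem_unitSteps {s : ℤ × ℤ} (hs : s ∈ R) :
    (partner T s.swap).swap - s ∈ unitSteps := by
  simpa using swap_sub_swap_mem_unitSteps (partner_sub_mem_unitSteps hT (hR s hs))

lemma isDominoTiling_transposeTiling : IsDominoTiling R (transposeTiling R T) :=
  isDominoTiling_image_pair (fun s hs => hR _ (partner_mem hT (hR s hs)))
    (fun _ => swap_partner_swap_sub_mem_unitSteps hR hT) (fun s _ => by simp [partner_partner hT])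

lemma partner_transposeTiling (s : ℤ × ℤ) :
    partner (transposeTiling R T) s = (partner T s.swap).swap := by
  by_cases hs : s ∈ R
  · exact partner_eq_of_pair_mem (isDominoTiling_transposeTiling hR hT) (mem_image_of_mem _ hs)
      (ne_of_sub_mem_unitSteps (swap_partner_swap_sub_mem_unitSteps hR hT hs))
  · have hs' : s.swap ∉ R := fun h => hs (by simpa using hR _ h)
    rw [partner_of_notMem (isDominoTiling_transposeTiling hR hT) hs,
      partner_of_notMem hT hs', Prod.swap_swap]

end Transpose

section SymmetricRegion

variable {R : Finset (ℤ × ℤ)} {T S : Finset (Finset (ℤ × ℤ))}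
  (hR : ∀ s ∈ R, s.swap ∈ R) (hT : IsDominoTiling R T)
include hR hT

lemma swap_cycleRotation_zpow_apply (k : ℤ) (s : ℤ × ℤ) :
    ((cycleRotation hT (isDominoTiling_transposeTiling hR hT) ^ k) s).swap =
      (cycleRotation hT (isDominoTiling_transposeTiling hR hT) ^ (-k)) s.swap := by
  have hsemiconj : SemiconjBy (Equiv.prodComm ℤ ℤ)
      (cycleRotation hT (isDominoTiling_transposeTiling hR hT))
      (cycleRotation hT (isDominoTiling_transposeTiling hR hT))⁻¹ := by
    refine Equiv.ext fun s => ?_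
    simp [cycleRotation, mul_inv_rev, partnerPerm_inv, partnerPerm_apply,
      partner_transposeTiling hR hT]
  simpa [inv_zpow'] using DFunLike.congr_fun (hsemiconj.zpow_right k) s

lemma partner_ne_partner_transposeTiling {s : ℤ × ℤ} (hs : s ∈ R) (hdiag : s.1 = s.2) :
    partner T s ≠ partner (transposeTiling R T) s := by
  intro h
  rw [partner_transposeTiling hR hT, show s.swap = s from Prod.ext hdiag.symm hdiag] at h
  have hadj := partner_sub_mem_unitSteps hT hs
  obtain ⟨x, y⟩ := s
  generalize partner T (x, y) = p at h hadj
  obtain ⟨a, b⟩ := p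
  rw [sub_mem_unitSteps_iff] at hadj
  simp only [Prod.swap_prod_mk, Prod.mk.injEq] at h hdiag
  omega

/-- A diagonal square `P ^ k s₀` of the cycle is fixed by the reflection, which reverses `P`, so
`P ^ (2 * k)` fixes `s₀`; the other squares `partner T (P ^ k s₀)` of the cycle have the wrong
colour. -/
lemma card_le_two_of_forall_diagonal_mem_alternatingCycle {s₀ : ℤ × ℤ} (hs₀ : s₀ ∈ R)
    (hdiag₀ : s₀.1 = s₀.2) {D : Finset (ℤ × ℤ)}
    (hD : ∀ s ∈ D, s.1 = s.2 ∧ s ∈ alternatingCycle hT (isDominoTiling_transposeTiling hR hT) s₀) :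
    #D ≤ 2 := by
  set hTt := isDominoTiling_transposeTiling hR hT
  set P := cycleRotation hT hTt
  have hswap₀ : s₀.swap = s₀ := Prod.ext hdiag₀.symm hdiag₀
  have hwhite₀ : White s₀ := by rw [White, hdiag₀]; exact Even.add_self _
  refine (card_le_card (t := {s₀, (P ^ ((MulAction.period P s₀ : ℤ) / 2)) s₀})
    fun s hs => ?_).trans card_le_two
  obtain ⟨hdiag, hcyc⟩ := hD s hs
  obtain ⟨k, rfl | rfl⟩ := exists_zpow_of_mem_alternatingCycle hT hTt hcyc
  · have hfix : (P ^ (2 * k)) s₀ = s₀ := by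
      have h := swap_cycleRotation_zpow_apply hR hT k s₀
      rw [hswap₀, show ((P ^ k) s₀).swap = (P ^ k) s₀ from Prod.ext hdiag.symm hdiag] at h
      rw [two_mul, zpow_add, Equiv.Perm.mul_apply, h, ← Equiv.Perm.mul_apply, ← zpow_add,
        add_neg_cancel, zpow_zero, Equiv.Perm.one_apply]
    simpa [Equiv.Perm.smul_def] using zpow_smul_eq_or_eq_of_zpow_two_mul_smul_eq
      (g := P) (x := s₀) (k := k) (by simpa [Equiv.Perm.smul_def] using hfix)
  · exfalso
    obtain ⟨hmem, hwhite⟩ := white_zpow_apply hT hTt hs₀ hwhite₀ k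
    refine (white_partner_iff hT hmem).mp ?_ hwhite
    rw [White, hdiag]
    exact Even.add_self _

theorem card_diagonal_le_two_mul_card (hS : IsForcingSet R T S) :
    #(R.filter fun s => s.1 = s.2) ≤ 2 * #S := by
  classical
  set hTt := isDominoTiling_transposeTiling hR hT
  let meets : ℤ × ℤ → Finset (ℤ × ℤ) → Prop := fun s d => ∃ t ∈ d, t ∈ alternatingCycle hT hTt s
  have hcount := card_mul_le_card_mul meets (m := 1) (n := 2) (s := R.filter fun s => s.1 = s.2)
    (t := S) (fun s hs => ?_) (fun d hd => ?_)
  · simpa [mul_comm] using hcount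
  · obtain ⟨hsR, hdiag⟩ := mem_filter.mp hs
    obtain ⟨d, hd, hmeets⟩ := hS.exists_meets hT hTt (C := alternatingCycle hT hTt s)
      (fun _ => partner_mem_alternatingCycle_left hT hTt)
      (fun _ => partner_mem_alternatingCycle_right hT hTt) hsR (MulAction.mem_orbit_self s)
      (partner_ne_partner_transposeTiling hR hT hsR hdiag)
    exact card_pos.mpr ⟨d, (mem_bipartiteAbove meets).mpr ⟨hd, hmeets⟩⟩
  · rcases (bipartiteBelow meets (R.filter fun s => s.1 = s.2) d).eq_empty_or_nonempty
      with h | ⟨s₀, hs₀⟩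
    · rw [h, card_empty]; omega
    obtain ⟨hs₀R, ⟨t₀, ht₀, hcyc₀⟩⟩ := (mem_bipartiteBelow meets).mp hs₀
    refine card_le_two_of_forall_diagonal_mem_alternatingCycle hR hT (mem_filter.mp hs₀R).1
      (mem_filter.mp hs₀R).2 fun s hs => ?_
    obtain ⟨hsR, ⟨t, ht, hcyc⟩⟩ := (mem_bipartiteBelow meets).mp hs
    exact ⟨(mem_filter.mp hsR).2,
      mem_alternatingCycle_of_mem_of_mem hT hTt (hS.1 hd) ht₀ hcyc₀ ht hcyc⟩

end SymmetricRegion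

section Pinwheel

variable {n : ℕ}

lemma mem_squareRegion {x y : ℤ} :
    (x, y) ∈ squareRegion n ↔ 0 ≤ x ∧ x < 2 * n ∧ 0 ≤ y ∧ y < 2 * n := by
  simp only [squareRegion, mem_Icc, Prod.mk_le_mk]
  omega

/-- The partner map of a tiling of the `2n × 2n` square by four wedges cut out by the diagonals:
vertical dominoes in the left and right wedges, horizontal ones in the top and bottom wedges. -/
def pinwheelPartner (n : ℕ) : ℤ × ℤ → ℤ × ℤ
  | (x, y) =>
    if x < y ∧ x + y < 2 * n - 1 then (if (y - x) % 2 = 1 then (x, y + 1) else (x, y - 1))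
    else if y < x ∧ 2 * (n : ℤ) ≤ x + y then
      (if (x + y) % 2 = 0 then (x, y + 1) else (x, y - 1))
    else if (n : ℤ) ≤ y then (if (x + y) % 2 = 1 then (x + 1, y) else (x - 1, y))
    else (if (x + y) % 2 = 0 then (x + 1, y) else (x - 1, y))

/-- The order in which the staircase dominoes force the pinwheel tiling. -/
def pinwheelRank (n : ℕ) : ℤ × ℤ → ℤ
  | (x, y) =>
    if x < y ∧ x + y < 2 * n - 1 then (if (y - x) % 2 = 1 then 2 * n - 2 - y else 2 * n - 1 - y)
    else if y < x ∧ 2 * (n : ℤ) ≤ x + y then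
      (if (x + y) % 2 = 0 then 4 * n - 4 - y else 4 * n - 3 - y)
    else if (n : ℤ) ≤ y then
      (if (x + y) % 2 = 1 then (if x + y = 2 * n - 1 then 0 else x - 1)
       else (if x + y = 2 * n then 0 else x - 2))
    else (if (x + y) % 2 = 0 then 2 * n - 1 + x else 2 * n - 2 + x)

/-- The square of a pinwheel domino of positive rank whose other neighbours all have smaller
rank. -/
def IsPinwheelPivot (n : ℕ) : ℤ × ℤ → Prop
  | (x, y) =>
    if x < y ∧ x + y < 2 * n - 1 then (y - x) % 2 = 0
    else if y < x ∧ 2 * (n : ℤ) ≤ x + y then (x + y) % 2 = 1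
    else if (n : ℤ) ≤ y then (x + y) % 2 = 1
    else (x + y) % 2 = 0

lemma pinwheelPartner_sub_mem_unitSteps (c : ℤ × ℤ) : pinwheelPartner n c - c ∈ unitSteps := by
  obtain ⟨x, y⟩ := c
  simp only [pinwheelPartner]
  split_ifs <;> simp [unitSteps]

lemma pinwheelPartner_mem {c : ℤ × ℤ} (hc : c ∈ squareRegion n) :
    pinwheelPartner n c ∈ squareRegion n := by
  obtain ⟨x, y⟩ := c
  rw [mem_squareRegion] at hc
  simp only [pinwheelPartner]
  split_ifs <;> rw [mem_squareRegion] <;> omega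

lemma pinwheelPartner_pinwheelPartner {c : ℤ × ℤ} (hc : c ∈ squareRegion n) :
    pinwheelPartner n (pinwheelPartner n c) = c := by
  obtain ⟨x, y⟩ := c
  rw [mem_squareRegion] at hc
  generalize huv : pinwheelPartner n (x, y) = q
  obtain ⟨u, v⟩ := q
  simp only [pinwheelPartner] at huv ⊢
  split_ifs at huv <;> simp only [Prod.mk.injEq] at huv <;> obtain ⟨rfl, rfl⟩ := huv <;>
    split_ifs <;> simp only [Prod.mk.injEq, true_and, and_true] <;> omega

lemma pinwheelRank_pinwheelPartner {c : ℤ × ℤ} (hc : c ∈ squareRegion n) :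
    pinwheelRank n (pinwheelPartner n c) = pinwheelRank n c := by
  obtain ⟨x, y⟩ := c
  rw [mem_squareRegion] at hc
  generalize huv : pinwheelPartner n (x, y) = q
  obtain ⟨u, v⟩ := q
  simp only [pinwheelPartner] at huv
  simp only [pinwheelRank]
  split_ifs at huv <;> simp only [Prod.mk.injEq] at huv <;> obtain ⟨rfl, rfl⟩ := huv <;>
    split_ifs <;> omega

lemma pinwheelRank_nonneg {c : ℤ × ℤ} (hc : c ∈ squareRegion n) : 0 ≤ pinwheelRank n c := by
  obtain ⟨x, y⟩ := c
  rw [mem_squareRegion] at hc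
  simp only [pinwheelRank]
  split_ifs <;> omega

lemma isPinwheelPivot_pinwheelPartner {c : ℤ × ℤ} (hc : c ∈ squareRegion n)
    (hr : 0 < pinwheelRank n c) (hp : ¬ IsPinwheelPivot n c) :
    IsPinwheelPivot n (pinwheelPartner n c) := by
  obtain ⟨x, y⟩ := c
  rw [mem_squareRegion] at hc
  generalize huv : pinwheelPartner n (x, y) = q
  obtain ⟨u, v⟩ := q
  simp only [pinwheelPartner] at huv
  simp only [pinwheelRank] at hr
  simp only [IsPinwheelPivot] at hp ⊢
  split_ifs at huv <;> simp only [Prod.mk.injEq] at huv <;> obtain ⟨rfl, rfl⟩ := huv <;>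
    split_ifs at hr hp ⊢ <;> omega

lemma isPinwheelPivot_cases {x y : ℤ} (hpiv : IsPinwheelPivot n (x, y))
    (hr : 0 < pinwheelRank n (x, y)) :
    (x < y ∧ x + y < 2 * n - 1 ∧ (y - x) % 2 = 0 ∧ pinwheelPartner n (x, y) = (x, y - 1) ∧
        pinwheelRank n (x, y) = 2 * n - 1 - y) ∨
      (y < x ∧ 2 * (n : ℤ) ≤ x + y ∧ (x + y) % 2 = 1 ∧ pinwheelPartner n (x, y) = (x, y - 1) ∧
        pinwheelRank n (x, y) = 4 * n - 3 - y) ∨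
      (¬(x < y ∧ x + y < 2 * n - 1) ∧ ¬(y < x ∧ 2 * (n : ℤ) ≤ x + y) ∧ (n : ℤ) ≤ y ∧
        (x + y) % 2 = 1 ∧ x + y ≠ 2 * n - 1 ∧ pinwheelPartner n (x, y) = (x + 1, y) ∧
        pinwheelRank n (x, y) = x - 1) ∨
      (¬(x < y ∧ x + y < 2 * n - 1) ∧ ¬(y < x ∧ 2 * (n : ℤ) ≤ x + y) ∧ ¬(n : ℤ) ≤ y ∧
        (x + y) % 2 = 0 ∧ pinwheelPartner n (x, y) = (x + 1, y) ∧
        pinwheelRank n (x, y) = 2 * n - 1 + x) := by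
  simp only [IsPinwheelPivot] at hpiv
  simp only [pinwheelRank] at hr ⊢
  simp only [pinwheelPartner]
  split_ifs at hpiv hr ⊢ <;> simp_all

lemma pinwheelRank_lt_of_isPinwheelPivot {c q : ℤ × ℤ} (hq : q ∈ squareRegion n)
    (hadj : q - c ∈ unitSteps) (hpiv : IsPinwheelPivot n c)
    (hr : 0 < pinwheelRank n c) (hne : q ≠ pinwheelPartner n c) :
    pinwheelRank n q < pinwheelRank n c := by
  obtain ⟨x, y⟩ := c
  obtain ⟨a, b⟩ := q
  rw [sub_mem_unitSteps_iff] at hadj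
  obtain ⟨ha₀, ha, hb₀, hb⟩ := mem_squareRegion.mp hq
  obtain ⟨hA, hB, hC, hp, he⟩ | ⟨hA, hB, hC, hp, he⟩ | ⟨hA, hB, hC, hD, hE, hp, he⟩ |
      ⟨hA, hB, hC, hD, hp, he⟩ := isPinwheelPivot_cases hpiv hr <;>
    rw [he] <;> rw [hp] at hne <;> simp only [ne_eq, Prod.mk.injEq, not_and] at hne <;>
    obtain ⟨rfl, rfl⟩ | ⟨rfl, rfl⟩ | ⟨rfl, rfl⟩ | ⟨rfl, rfl⟩ := hadj <;>
    simp only [pinwheelRank] <;> split_ifs <;> omega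

end Pinwheel

section PinwheelTiling

variable {n : ℕ} {T : Finset (Finset (ℤ × ℤ))}

noncomputable def pinwheelTiling (n : ℕ) : Finset (Finset (ℤ × ℤ)) :=
  (squareRegion n).image fun c => {c, pinwheelPartner n c}

/-- The horizontal dominoes along the anti-diagonal of the upper-left quarter. -/
def stairDominoes (n : ℕ) : Finset (Finset (ℤ × ℤ)) :=
  (range n).image fun i : ℕ => {((i : ℤ), 2 * (n : ℤ) - 1 - i), ((i : ℤ) + 1, 2 * (n : ℤ) - 1 - i)}

lemma isDominoTiling_pinwheelTiling : IsDominoTiling (squareRegion n) (pinwheelTiling n) :=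
  isDominoTiling_image_pair (fun _ => pinwheelPartner_mem)
    (fun c _ => pinwheelPartner_sub_mem_unitSteps c) (fun _ => pinwheelPartner_pinwheelPartner)

lemma card_stairDominoes : #(stairDominoes n) = n := by
  rw [stairDominoes, card_image_of_injOn, card_range]
  intro i _ j _ hij
  have h : ((i : ℤ), 2 * (n : ℤ) - 1 - i) ∈
      ({((j : ℤ), 2 * (n : ℤ) - 1 - j), ((j : ℤ) + 1, 2 * (n : ℤ) - 1 - j)} :
        Finset (ℤ × ℤ)) := by
    simp only at hij
    rw [← hij]
    exact mem_insert_self _ _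
  simp only [mem_insert, mem_singleton, Prod.mk.injEq] at h
  omega

lemma stairDominoes_subset_pinwheelTiling : stairDominoes n ⊆ pinwheelTiling n := by
  simp only [stairDominoes, pinwheelTiling, subset_iff, mem_image, mem_range]
  rintro d ⟨i, hi, rfl⟩
  refine ⟨((i : ℤ), 2 * (n : ℤ) - 1 - i), mem_squareRegion.mpr (by omega), ?_⟩
  simp only [pinwheelPartner]
  split_ifs <;> first | omega | rfl

lemma pair_mem_stairDominoes {c : ℤ × ℤ} (hc : c ∈ squareRegion n)
    (h0 : pinwheelRank n c = 0) : {c, pinwheelPartner n c} ∈ stairDominoes n := by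
  obtain ⟨x, y⟩ := c
  rw [mem_squareRegion] at hc
  have hcases : (x + y = 2 * n - 1 ∧ 0 ≤ x ∧ x < n ∧ pinwheelPartner n (x, y) = (x + 1, y)) ∨
      (x + y = 2 * n ∧ 0 < x ∧ x ≤ n ∧ pinwheelPartner n (x, y) = (x - 1, y)) := by
    simp only [pinwheelRank] at h0
    simp only [pinwheelPartner]
    split_ifs at h0 ⊢ <;> simp_all [Prod.ext_iff] <;> omega
  simp only [stairDominoes, mem_image, mem_range]
  rcases hcases with ⟨hsum, hx0, hxn, hp⟩ | ⟨hsum, hx0, hxn, hp⟩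
  · refine ⟨x.toNat, by omega, ?_⟩
    rw [hp, Int.toNat_of_nonneg hx0, show 2 * (n : ℤ) - 1 - x = y by omega]
  · refine ⟨(x - 1).toNat, by omega, ?_⟩
    rw [hp, Int.toNat_of_nonneg (by omega), show 2 * (n : ℤ) - 1 - (x - 1) = y by omega,
      sub_add_cancel, pair_comm]

lemma exists_pivot_mem_pair {c : ℤ × ℤ} (hc : c ∈ squareRegion n) (hr : 0 < pinwheelRank n c) :
    ∃ p ∈ ({c, pinwheelPartner n c} : Finset (ℤ × ℤ)), pinwheelRank n p = pinwheelRank n c ∧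
      ∀ q ∈ squareRegion n, q - p ∈ unitSteps → q ≠ pinwheelPartner n p →
        pinwheelRank n q < pinwheelRank n c := by
  by_cases hpiv : IsPinwheelPivot n c
  · exact ⟨c, mem_insert_self _ _, rfl,
      fun q hq hadj hne => pinwheelRank_lt_of_isPinwheelPivot hq hadj hpiv hr hne⟩
  · have hrank := pinwheelRank_pinwheelPartner hc
    refine ⟨pinwheelPartner n c, mem_insert_of_mem (mem_singleton_self _), hrank,
      fun q hq hadj hne => hrank ▸ pinwheelRank_lt_of_isPinwheelPivot hq hadj
        (isPinwheelPivot_pinwheelPartner hc hr hpiv) (hrank ▸ hr) hne⟩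

/-- By induction on the rank: a pivot cannot be covered together with any other neighbour, since
that neighbour is already paired with its own pinwheel partner. -/
lemma partner_eq_pinwheelPartner (hT : IsDominoTiling (squareRegion n) T)
    (hS : stairDominoes n ⊆ T) {c : ℤ × ℤ} (hc : c ∈ squareRegion n) :
    partner T c = pinwheelPartner n c := by
  induction hr : (pinwheelRank n c).toNat using Nat.strong_induction_on generalizing c with
  | _ r ih =>
  have ih' : ∀ q ∈ squareRegion n, pinwheelRank n q < pinwheelRank n c →
      partner T q = pinwheelPartner n q := fun q hq hlt =>
    ih _ (by have := pinwheelRank_nonneg hq; omega) hq rfl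
  rcases (pinwheelRank_nonneg hc).eq_or_lt with h0 | hpos
  · exact partner_eq_of_pair_mem hT (hS (pair_mem_stairDominoes hc h0.symm))
      (ne_of_sub_mem_unitSteps (pinwheelPartner_sub_mem_unitSteps c))
  obtain ⟨p, hp, hrank, hlt⟩ := exists_pivot_mem_pair hc hpos
  have hpR : p ∈ squareRegion n := by
    rcases mem_insert.mp hp with rfl | hp
    exacts [hc, mem_singleton.mp hp ▸ pinwheelPartner_mem hc]
  have hpartner : partner T p = pinwheelPartner n p := by
    by_contra hne
    have hqR := partner_mem hT hpR
    have hq := ih' _ hqR (hlt _ hqR (partner_sub_mem_unitSteps hT hpR) hne)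
    rw [partner_partner hT] at hq
    apply hne
    calc partner T p = pinwheelPartner n (pinwheelPartner n (partner T p)) :=
          (pinwheelPartner_pinwheelPartner hqR).symm
      _ = pinwheelPartner n p := by rw [← hq]
  rcases mem_insert.mp hp with rfl | hp
  · exact hpartner
  · rw [mem_singleton.mp hp, pinwheelPartner_pinwheelPartner hc] at hpartner
    calc partner T c = partner T (partner T (pinwheelPartner n c)) := by rw [hpartner]
      _ = pinwheelPartner n c := partner_partner hT _

lemma isForcingSet_stairDominoes :
    IsForcingSet (squareRegion n) (pinwheelTiling n) (stairDominoes n) := by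
  refine ⟨stairDominoes_subset_pinwheelTiling, fun T hT hS => ?_⟩
  rw [eq_image_pair_partner hT, pinwheelTiling]
  exact image_congr fun c hc => by rw [partner_eq_pinwheelPartner hT hS hc]

end PinwheelTiling

lemma swap_mem_squareRegion {n : ℕ} {s : ℤ × ℤ} (hs : s ∈ squareRegion n) :
    s.swap ∈ squareRegion n := by
  obtain ⟨x, y⟩ := s
  rw [mem_squareRegion] at hs
  rw [Prod.swap_prod_mk, mem_squareRegion]
  omega

lemma card_diagonal_squareRegion (n : ℕ) :
    #((squareRegion n).filter fun s => s.1 = s.2) = 2 * n := by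
  have hdiag : (squareRegion n).filter (fun s => s.1 = s.2) =
      (Ico (0 : ℤ) (2 * n)).image fun i => (i, i) := by
    ext ⟨x, y⟩
    simp only [mem_filter, mem_squareRegion, mem_image, mem_Ico, Prod.mk.injEq]
    constructor
    · rintro ⟨h, rfl⟩
      exact ⟨x, by omega⟩
    · rintro ⟨i, hi, rfl, rfl⟩
      omega
  rw [hdiag, card_image_of_injective _ fun i j h => (Prod.mk.inj h).1, Int.card_Ico]
  omega

theorem forcingNumber_squareRegion_general (n : ℕ) :
    forcingNumber (squareRegion n) = n := by
  have hn : n ∈ {m | ∃ T S, IsDominoTiling (squareRegion n) T ∧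
      IsForcingSet (squareRegion n) T S ∧ S.card = m} :=
    ⟨pinwheelTiling n, stairDominoes n, isDominoTiling_pinwheelTiling,
      isForcingSet_stairDominoes, card_stairDominoes⟩
  refine le_antisymm (Nat.sInf_le hn) (le_csInf ⟨n, hn⟩ ?_)
  rintro m ⟨T, S, hT, hS, rfl⟩
  have hcount := card_diagonal_le_two_mul_card (fun _ => swap_mem_squareRegion) hT hS
  rw [card_diagonal_squareRegion] at hcount
  omega

/-- Pachter–Kim. The forcing number of the `2n × 2n` square is `n`. -/
theorem forcingNumber_squareRegion (n : ℕ) (hn : 0 < n) :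
    forcingNumber (squareRegion n) = n :=
  forcingNumber_squareRegion_general n
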